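/- arXiv:2604.05306 — 2 statements merged into one kernel-verified Lean document; each statement's English description precedes it below -/
import Mathlib

section
/- Latent-answer extraction under support-preserving reweighting (Theorem 1, mass-ratio bound): let g : Z → Y map trajectories to answers, let y⋆ be the correct answer and ȳ ≠ y⋆ a competing answer with M ȳ > 0. Suppose there are constants a > b such that every trajectory z with g z = y⋆ satisfies r z ≥ a and every trajectory z with g z = ȳ satisfies r z ≤ b. Then the tilted update amplifies the correct answer's relative mass multiplicatively: M' y⋆ / M' ȳ ≥ exp(η * (a − b)) * (M y⋆ / M ȳ), where M y = ∑_{z : g z = y} π z and M' y = ∑_{z : g z = y} π' z. (In particular M' ȳ > 0, so the ratio is well defined.) -/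
/-- Latent-answer extraction under support-preserving reweighting (mass-ratio bound). -/
theorem latent_answer_extraction {Z : Type*} [Fintype Z] [Nonempty Z]
    {Y : Type*} [DecidableEq Y]
    (π : Z → ℝ) (hπ0 : ∀ z, 0 ≤ π z) (hπ1 : ∑ z, π z = 1)
    (r : Z → ℝ) (η : ℝ) (hη : 0 < η)
    (Zη : ℝ) (hZη : Zη = ∑ z, π z * Real.exp (η * r z))
    (π' : Z → ℝ) (hπ' : ∀ z, π' z = π z * Real.exp (η * r z) / Zη)
    (g : Z → Y) (ystar ybar : Y) (hne : ybar ≠ ystar)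
    (a b : ℝ) (hab : a > b)
    (M M' : Y → ℝ)
    (hM : ∀ y, M y = ∑ z ∈ Finset.univ.filter (fun z => g z = y), π z)
    (hM' : ∀ y, M' y = ∑ z ∈ Finset.univ.filter (fun z => g z = y), π' z)
    (hMbar : 0 < M ybar)
    (ha : ∀ z, g z = ystar → a ≤ r z)
    (hb : ∀ z, g z = ybar → r z ≤ b) :
    0 < M' ybar ∧
      Real.exp (η * (a - b)) * (M ystar / M ybar) ≤ M' ystar / M' ybar := by
  set S : Y → ℝ := fun y => ∑ z ∈ Finset.univ.filter (fun z => g z = y), π z * Real.exp (η * r z) with hS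
  have hterm : ∀ z : Z, 0 ≤ π z * Real.exp (η * r z) := fun z =>
    mul_nonneg (hπ0 z) (Real.exp_pos _).le
  -- some z with g z = ybar and π z > 0
  have hSbar_pos : 0 < S ybar := by
    by_contra h
    have hzero : S ybar = 0 := le_antisymm (not_lt.mp h)
      (Finset.sum_nonneg fun z _ => hterm z)
    have : M ybar = 0 := by
      rw [hM]
      apply Finset.sum_eq_zero
      intro z hz
      have hz0 := Finset.sum_eq_zero_iff_of_nonneg (fun z _ => hterm z) |>.mp hzero z hz
      rcases mul_eq_zero.mp hz0 with h1 | h2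
      · exact h1
      · exact absurd h2 (Real.exp_pos _).ne'
    linarith
  have hZpos : 0 < Zη := by
    rw [hZη]
    calc 0 < S ybar := hSbar_pos
    _ ≤ ∑ z, π z * Real.exp (η * r z) :=
      Finset.sum_le_sum_of_subset_of_nonneg (Finset.filter_subset _ _)
        (fun z _ _ => hterm z)
  have hM'eq : ∀ y, M' y = S y / Zη := by
    intro y
    rw [hM' y, hS]
    simp only [hπ']
    rw [Finset.sum_div]
  have hM'bar : 0 < M' ybar := by
    rw [hM'eq]; exact div_pos hSbar_pos hZpos
  refine ⟨hM'bar, ?_⟩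
  have hMstar_nonneg : 0 ≤ M ystar := by
    rw [hM]; exact Finset.sum_nonneg fun z _ => hπ0 z
  have hSstar : Real.exp (η * a) * M ystar ≤ S ystar := by
    rw [hM, Finset.mul_sum, hS]
    apply Finset.sum_le_sum
    intro z hz
    rw [mul_comm (π z)]
    apply mul_le_mul_of_nonneg_right _ (hπ0 z)
    exact Real.exp_le_exp.mpr (mul_le_mul_of_nonneg_left
      (ha z (Finset.mem_filter.mp hz).2) hη.le)
  have hSbar : S ybar ≤ Real.exp (η * b) * M ybar := by
    rw [hM, Finset.mul_sum, hS]
    apply Finset.sum_le_sum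
    intro z hz
    rw [mul_comm (π z)]
    apply mul_le_mul_of_nonneg_right _ (hπ0 z)
    exact Real.exp_le_exp.mpr (mul_le_mul_of_nonneg_left
      (hb z (Finset.mem_filter.mp hz).2) hη.le)
  have hratio : M' ystar / M' ybar = S ystar / S ybar := by
    rw [hM'eq, hM'eq]
    field_simp
  rw [hratio]
  have hkey : Real.exp (η * a) * M ystar / (Real.exp (η * b) * M ybar)
      ≤ S ystar / S ybar :=
    div_le_div₀ (Finset.sum_nonneg fun z _ => hterm z) hSstar hSbar_pos hSbar
  calc Real.exp (η * (a - b)) * (M ystar / M ybar)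
      = Real.exp (η * a) * M ystar / (Real.exp (η * b) * M ybar) := by
        rw [mul_sub, Real.exp_sub]
        field_simp
    _ ≤ S ystar / S ybar := hkey
end

section
/- Specialization of the latent-answer extraction theorem to the verbal-confidence reward: suppose each trajectory z carries a confidence p z ∈ [0,1] and the reward is r z = p z if g z = y⋆ and r z = −p z otherwise, where y⋆ is the correct answer. Let ȳ ≠ y⋆ be a competing answer with M ȳ > 0, and suppose α, β are constants with α + β > 0 such that every trajectory z with g z = y⋆ satisfies p z ≥ α and every trajectory z with g z = ȳ satisfies p z ≥ β. Then M' y⋆ / M' ȳ ≥ exp(η * (α + β)) * (M y⋆ / M ȳ), where M y = ∑_{z : g z = y} π z and M' y = ∑_{z : g z = y} π' z. -/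
/-- Specialization of latent-answer extraction to the verbal-confidence reward. -/
theorem latent_answer_extraction_verbal {Z : Type*} [Fintype Z] [Nonempty Z]
    {Y : Type*} [DecidableEq Y]
    (π : Z → ℝ) (hπ0 : ∀ z, 0 ≤ π z) (hπ1 : ∑ z, π z = 1)
    (η : ℝ) (hη : 0 < η)
    (p : Z → ℝ) (hp : ∀ z, 0 ≤ p z ∧ p z ≤ 1)
    (g : Z → Y) (ystar ybar : Y) (hne : ybar ≠ ystar)
    (r : Z → ℝ) (hr : ∀ z, r z = if g z = ystar then p z else -p z)
    (Zη : ℝ) (hZη : Zη = ∑ z, π z * Real.exp (η * r z))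
    (π' : Z → ℝ) (hπ' : ∀ z, π' z = π z * Real.exp (η * r z) / Zη)
    (α β : ℝ) (hαβ : 0 < α + β)
    (hα : ∀ z, g z = ystar → α ≤ p z)
    (hβ : ∀ z, g z = ybar → β ≤ p z)
    (M M' : Y → ℝ)
    (hM : ∀ y, M y = ∑ z ∈ Finset.univ.filter (fun z => g z = y), π z)
    (hM' : ∀ y, M' y = ∑ z ∈ Finset.univ.filter (fun z => g z = y), π' z)
    (hMbar : 0 < M ybar) :
    Real.exp (η * (α + β)) * (M ystar / M ybar) ≤ M' ystar / M' ybar := by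
  set S := Finset.univ.filter (fun z => g z = ystar) with hS
  set T := Finset.univ.filter (fun z => g z = ybar) with hT
  set A := ∑ z ∈ S, π z * Real.exp (η * r z) with hA
  set B := ∑ z ∈ T, π z * Real.exp (η * r z) with hB
  have hZpos : 0 < Zη := by
    rw [hZη]
    have hex : ∃ z : Z, 0 < π z := by
      by_contra h
      push_neg at h
      have : ∑ z, π z = 0 := le_antisymm (Finset.sum_nonpos (fun z _ => h z))
        (Finset.sum_nonneg (fun z _ => hπ0 z))
      linarith [hπ1]
    obtain ⟨z0, hz0⟩ := hex
    have : (0:ℝ) < π z0 * Real.exp (η * r z0) :=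
      mul_pos hz0 (Real.exp_pos _)
    refine Finset.sum_pos' (fun z _ => mul_nonneg (hπ0 z) (Real.exp_pos _).le) ⟨z0, Finset.mem_univ _, this⟩
  -- lower bound on B (positivity)
  have hBlow : Real.exp (-η) * M ybar ≤ B := by
    rw [hM, Finset.mul_sum]
    apply Finset.sum_le_sum
    intro z hz
    rw [mul_comm (Real.exp (-η)) (π z)]
    apply mul_le_mul_of_nonneg_left _ (hπ0 z)
    apply Real.exp_le_exp.2
    have hgz : g z = ybar := (Finset.mem_filter.1 hz).2
    have : r z = -p z := by rw [hr]; simp [hgz, hne]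
    rw [this]
    nlinarith [(hp z).2, hη.le]
  have hBpos : 0 < B := lt_of_lt_of_le (mul_pos (Real.exp_pos _) hMbar) hBlow
  -- A ≥ exp(ηα) * M ystar
  have hAlow : Real.exp (η * α) * M ystar ≤ A := by
    rw [hM, Finset.mul_sum]
    apply Finset.sum_le_sum
    intro z hz
    rw [mul_comm (Real.exp (η * α)) (π z)]
    apply mul_le_mul_of_nonneg_left _ (hπ0 z)
    apply Real.exp_le_exp.2
    have hgz : g z = ystar := (Finset.mem_filter.1 hz).2
    have : r z = p z := by rw [hr]; simp [hgz]
    rw [this]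
    nlinarith [hα z hgz, hη.le]
  -- B ≤ exp(-ηβ) * M ybar
  have hBup : B ≤ Real.exp (-(η * β)) * M ybar := by
    rw [hM, Finset.mul_sum]
    apply Finset.sum_le_sum
    intro z hz
    rw [mul_comm (Real.exp (-(η * β))) (π z)]
    apply mul_le_mul_of_nonneg_left _ (hπ0 z)
    apply Real.exp_le_exp.2
    have hgz : g z = ybar := (Finset.mem_filter.1 hz).2
    have : r z = -p z := by rw [hr]; simp [hgz, hne]
    rw [this]
    nlinarith [hβ z hgz, hη.le]
  have hMs : 0 ≤ M ystar := by
    rw [hM]; exact Finset.sum_nonneg (fun z _ => hπ0 z)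
  have hM'star : M' ystar = A / Zη := by
    rw [hM', hA]
    rw [Finset.sum_div]
    exact Finset.sum_congr rfl (fun z _ => (hπ' z))
  have hM'bar : M' ybar = B / Zη := by
    rw [hM', hB]
    rw [Finset.sum_div]
    exact Finset.sum_congr rfl (fun z _ => (hπ' z))
  have hratio : M' ystar / M' ybar = A / B := by
    rw [hM'star, hM'bar]
    field_simp
  rw [hratio]
  rw [mul_div_assoc', div_le_div_iff₀ hMbar hBpos]
  have hexp : Real.exp (η * (α + β)) * Real.exp (-(η * β)) = Real.exp (η * α) := by
    rw [← Real.exp_add]; ring_nf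
  calc Real.exp (η * (α + β)) * M ystar * B
      ≤ Real.exp (η * (α + β)) * M ystar * (Real.exp (-(η * β)) * M ybar) :=
        mul_le_mul_of_nonneg_left hBup (mul_nonneg (Real.exp_pos _).le hMs)
    _ = Real.exp (η * α) * M ystar * M ybar := by rw [← hexp]; ring
    _ ≤ A * M ybar := mul_le_mul_of_nonneg_right hAlow hMbar.le
end
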